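/- Let W_1,...,W_P be pairwise disjoint sets of equal size w in a tournament T with d(W_i, W_j) ≥ 1 - Λ for i < j, where Λ = λ/(4P). Then there exist subsets A_i ⊆ W_i with |A_1| = ... = |A_P| = ⌈w/2⌉ such that: for all i < j and every v ∈ A_i, d({v}, A_j) ≥ 1 - λ, and for all i < j and every v ∈ A_j, d(A_i, {v}) ≥ 1 - λ. -/

import Mathlib

/-- A tournament: an irreflexive relation such that for distinct vertices exactly one
direction is an edge. -/
def IsTournament {V : Type*} (E : V → V → Prop) : Prop :=
  (∀ v, ¬ E v v) ∧ ∀ u v : V, u ≠ v → (E u v ↔ ¬ E v u)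

/-- The directed density `d(A,B) = e(A,B)/(|A||B|)`, where `e(A,B)` is the number of
edges directed from `A` to `B`. -/
noncomputable def density {V : Type*} (E : V → V → Prop) [DecidableRel E]
    (A B : Finset V) : ℝ :=
  ((((A ×ˢ B).filter fun p => E p.1 p.2).card : ℝ)) / ((A.card : ℝ) * (B.card : ℝ))

/-!
By Markov's inequality, `d(W_i, W_j) ≥ 1 - λ/(4P)` leaves at most `w/(2P)` vertices of `W_i`
that miss more than `λw/2` of their edges towards `W_j` (for `i < j`) or from `W_j`
(for `j < i`). Discarding these for all `j` keeps at least `w/2`, hence `⌈w/2⌉`, vertices of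
each `W_i`. Since `|A_j| ≥ w/2`, a vertex missing at most `λw/2` edges into `W_j` misses at
most a `λ`-fraction of `A_j`. Reversing all edges turns the condition on `d(A_i, {v})` into
one on `d({v}, A_i)`.
-/

open Finset

lemma card_filter_lt_le_of_sum_le {α : Type*} (s : Finset α) (f : α → ℝ)
    (hf : ∀ a ∈ s, 0 ≤ f a) {θ c : ℝ} (hθ : 0 ≤ θ) (hc : 0 ≤ c)
    (hsum : ∑ a ∈ s, f a ≤ θ * c) :
    (#(s.filter fun a => θ < f a) : ℝ) ≤ c := by
  set S := s.filter fun a => θ < f a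
  rcases S.eq_empty_or_nonempty with hS | hS
  · simpa [hS] using hc
  refine le_of_lt (lt_of_mul_lt_mul_right ?_ hθ)
  calc (#S : ℝ) * θ = ∑ _a ∈ S, θ := by rw [sum_const, nsmul_eq_mul]
    _ < ∑ a ∈ S, f a := sum_lt_sum_of_nonempty hS fun a ha => (mem_filter.1 ha).2
    _ ≤ ∑ a ∈ s, f a :=
      sum_le_sum_of_subset_of_nonneg (filter_subset _ _) fun a ha _ => hf a ha
    _ ≤ c * θ := by linarith

lemma exists_subset_forall_card_ge {ι α : Type*} [Fintype ι] (s : Finset α)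
    (p : ι → α → Prop) [∀ j, DecidablePred (p j)] {c : ℝ}
    (h : ∀ j, (#(s.filter fun a => ¬ p j a) : ℝ) ≤ c) :
    ∃ t ⊆ s, (∀ a ∈ t, ∀ j, p j a) ∧ (#s : ℝ) - Fintype.card ι * c ≤ #t := by
  classical
  refine ⟨s.filter fun a => ∀ j, p j a, filter_subset _ _,
    fun a ha => (mem_filter.1 ha).2, ?_⟩
  have hfail : s.filter (fun a => ¬ ∀ j, p j a) =
      univ.biUnion fun j => s.filter fun a => ¬ p j a := by
    ext a
    simp [not_forall]
  have hbound : (#(s.filter fun a => ¬ ∀ j, p j a) : ℝ) ≤ Fintype.card ι * c :=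
    calc (#(s.filter fun a => ¬ ∀ j, p j a) : ℝ)
        ≤ ∑ j, (#(s.filter fun a => ¬ p j a) : ℝ) := by
          rw [hfail]
          exact_mod_cast card_biUnion_le
      _ ≤ ∑ _j : ι, c := sum_le_sum fun j _ => h j
      _ = Fintype.card ι * c := by rw [sum_const, nsmul_eq_mul, card_univ]
  have hsplit : (#s : ℝ) =
      #(s.filter fun a => ∀ j, p j a) + #(s.filter fun a => ¬ ∀ j, p j a) := by
    exact_mod_cast (card_filter_add_card_filter_not (s := s) fun a => ∀ j, p j a).symm
  linarith

section Density

variable {V : Type*} (R : V → V → Prop) [DecidableRel R]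

lemma density_swap (A B : Finset V) : density (fun a b => R b a) B A = density R A B := by
  have : #((B ×ˢ A).filter fun p => R p.2 p.1) = #((A ×ˢ B).filter fun p => R p.1 p.2) :=
    card_nbij' Prod.swap Prod.swap (fun _ h => by simp_all) (fun _ h => by simp_all)
      (fun _ _ => rfl) (fun _ _ => rfl)
  rw [density, density, this, mul_comm]

lemma card_filter_product_eq_sum (X Y : Finset V) :
    #((X ×ˢ Y).filter fun p => R p.1 p.2) = ∑ v ∈ X, #(Y.filter (R v)) := by
  rw [card_filter, sum_product]
  exact sum_congr rfl fun _ _ => (card_filter _ _).symm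

lemma density_singleton_left (v : V) (B : Finset V) :
    density R {v} B = #(B.filter (R v)) / #B := by
  rw [density, card_filter_product_eq_sum, sum_singleton, card_singleton, Nat.cast_one, one_mul]

lemma sum_card_filter_not_le (X Y : Finset V) {ε : ℝ} (h : 1 - ε ≤ density R X Y) :
    ∑ v ∈ X, (#(Y.filter fun u => ¬ R v u) : ℝ) ≤ ε * (#X * #Y) := by
  have hedges : (1 - ε) * (#X * #Y) ≤ ∑ v ∈ X, (#(Y.filter (R v)) : ℝ) := by
    rcases (show (0 : ℝ) ≤ #X * #Y by positivity).eq_or_lt with h0 | h0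
    · rw [← h0, mul_zero]
      positivity
    · rwa [density, le_div_iff₀ h0, card_filter_product_eq_sum, Nat.cast_sum] at h
  have hsplit : ∀ v ∈ X, (#(Y.filter fun u => ¬ R v u) : ℝ) = #Y - #(Y.filter (R v)) := by
    intro v _
    rw [eq_sub_iff_add_eq, add_comm]
    exact_mod_cast card_filter_add_card_filter_not (R v)
  rw [sum_congr rfl hsplit, sum_sub_distrib, sum_const, nsmul_eq_mul]
  linarith

lemma card_filter_lt_card_filter_not_le (X Y : Finset V) {ε t : ℝ} (hε : 0 ≤ ε) (ht : 0 < t)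
    (h : 1 - ε ≤ density R X Y) :
    (#(X.filter fun v => t * ε * #Y < #(Y.filter fun u => ¬ R v u)) : ℝ) ≤ #X / t := by
  refine card_filter_lt_le_of_sum_le X _ (fun _ _ => by positivity) (by positivity)
    (by positivity) ?_
  calc _ ≤ ε * (#X * #Y) := sum_card_filter_not_le R X Y h
    _ = t * ε * #Y * (#X / t) := by field_simp

lemma one_sub_le_density_singleton_left {v : V} {A B : Finset V} (hAB : A ⊆ B)
    (hA : A.Nonempty) {lam : ℝ} (h : (#(B.filter fun u => ¬ R v u) : ℝ) ≤ lam * #A) :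
    1 - lam ≤ density R {v} A := by
  have hmissing : (#(A.filter fun u => ¬ R v u) : ℝ) ≤ #(B.filter fun u => ¬ R v u) := by
    exact_mod_cast card_le_card (filter_subset_filter _ hAB)
  have hsplit : (#(A.filter (R v)) : ℝ) + #(A.filter fun u => ¬ R v u) = #A := by
    exact_mod_cast card_filter_add_card_filter_not (R v)
  rw [density_singleton_left, le_div_iff₀ (by exact_mod_cast hA.card_pos)]
  linarith

/-- The paper's `Q^i_j`, with its density threshold expressed as a number `θ` of missing edges. -/
def MissesAtMost {ι : Type*} [LT ι] (W : ι → Finset V) (θ : ℝ) (i j : ι) (v : V) : Prop :=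
  (i < j → (#((W j).filter fun u => ¬ R v u) : ℝ) ≤ θ) ∧
  (j < i → (#((W j).filter fun u => ¬ R u v) : ℝ) ≤ θ)

lemma exists_subset_card_eq_forall_missesAtMost {ι : Type*} [LinearOrder ι] [Fintype ι]
    {W : ι → Finset V} {w : ℕ} (hcard : ∀ i, #(W i) = w) {ε : ℝ} (hε : 0 ≤ ε)
    (hdens : ∀ i j, i < j → 1 - ε ≤ density R (W i) (W j)) (i : ι) :
    ∃ A ⊆ W i, #A = (w + 1) / 2 ∧
      ∀ v ∈ A, ∀ j, MissesAtMost R W (2 * Fintype.card ι * ε * w) i j v := by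
  classical
  have hι : (0 : ℝ) < Fintype.card ι := by exact_mod_cast Fintype.card_pos_iff.2 ⟨i⟩
  set t : ℝ := 2 * Fintype.card ι
  have ht : 0 < t := by positivity
  have hbad : ∀ j,
      (#((W i).filter fun v => ¬ MissesAtMost R W (t * ε * w) i j v) : ℝ) ≤ w / t := by
    intro j
    rcases lt_trichotomy i j with hij | rfl | hji
    · have h := card_filter_lt_card_filter_not_le R (W i) (W j) hε ht (hdens i j hij)
      rw [hcard, hcard] at h
      refine le_trans ?_ h
      exact_mod_cast card_le_card (monotone_filter_right _ fun v _ hv => by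
        simpa [MissesAtMost, hij, hij.not_gt] using hv)
    · simp only [MissesAtMost, lt_self_iff_false, IsEmpty.forall_iff, and_self,
        not_true_eq_false, filter_false, card_empty, CharP.cast_eq_zero]
      positivity
    · have h := card_filter_lt_card_filter_not_le (fun a b => R b a) (W i) (W j) hε ht
        ((hdens j i hji).trans_eq (density_swap R (W j) (W i)).symm)
      rw [hcard, hcard] at h
      refine le_trans ?_ h
      exact_mod_cast card_le_card (monotone_filter_right _ fun v _ hv => by
        simpa [MissesAtMost, hji, hji.not_gt] using hv)
  obtain ⟨F, hFW, hFgood, hFcard⟩ := exists_subset_forall_card_ge (W i) _ hbad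
  rw [hcard, show (Fintype.card ι : ℝ) * (w / t) = w / 2 by simp only [t]; field_simp] at hFcard
  have : w ≤ 2 * #F := by exact_mod_cast (by linarith : (w : ℝ) ≤ 2 * #F)
  obtain ⟨A, hAF, hAcard⟩ := exists_subset_card_eq (show (w + 1) / 2 ≤ #F by omega)
  exact ⟨A, hAF.trans hFW, hAcard, fun v hv => hFgood v (hAF hv)⟩

end Density

theorem stmt15_general {V : Type*} (E : V → V → Prop)
    [DecidableRel E] (P : ℕ)
    (lam : ℝ) (hlam : 0 ≤ lam) (W : Fin P → Finset V) (w : ℕ)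
    (hcard : ∀ i, (W i).card = w)
    (hdens : ∀ i j, i < j → 1 - lam / (4 * (P : ℝ)) ≤ density E (W i) (W j)) :
    ∃ A : Fin P → Finset V,
      (∀ i, A i ⊆ W i) ∧ (∀ i, (A i).card = (w + 1) / 2) ∧
      (∀ i j, i < j → ∀ v ∈ A i, 1 - lam ≤ density E {v} (A j)) ∧
      (∀ i j, i < j → ∀ v ∈ A j, 1 - lam ≤ density E (A i) {v}) := by
  choose A hAW hAcard hAgood using
    exists_subset_card_eq_forall_missesAtMost E hcard (ε := lam / (4 * P)) (by positivity) hdens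
  have hθ : ∀ j, 2 * Fintype.card (Fin P) * (lam / (4 * P)) * w ≤ lam * #(A j) := by
    intro j
    have : (0 : ℝ) < P := by exact_mod_cast j.pos
    have : (w : ℝ) ≤ 2 * #(A j) := by
      rw [hAcard]
      exact_mod_cast (by omega : w ≤ 2 * ((w + 1) / 2))
    calc _ = lam * w / 2 := by rw [Fintype.card_fin]; field_simp; ring
      _ ≤ lam * #(A j) := by nlinarith
  have hA_nonempty : ∀ i j, ∀ v ∈ A i, (A j).Nonempty := fun i j v hv => by
    rw [← card_pos, hAcard, ← hAcard i]
    exact card_pos.2 ⟨v, hv⟩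
  refine ⟨A, hAW, hAcard, fun i j hij v hv => ?_, fun i j hij v hv => ?_⟩
  · exact one_sub_le_density_singleton_left E (hAW j) (hA_nonempty i j v hv)
      (((hAgood i v hv j).1 hij).trans (hθ j))
  · rw [← density_swap]
    exact one_sub_le_density_singleton_left (fun a b => E b a) (hAW i) (hA_nonempty j i v hv)
      (((hAgood j v hv i).2 hij).trans (hθ i))

/-- Cleaning step: from pairwise disjoint `W₁,...,W_P` of equal size `w` with
`d(W_i, W_j) ≥ 1 - λ/(4P)` for `i < j`, one can pick `A_i ⊆ W_i` of size `⌈w/2⌉` so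
that every `v ∈ A_i` satisfies `d({v}, A_j) ≥ 1 - λ` for `i < j`, and every `v ∈ A_j`
satisfies `d(A_i, {v}) ≥ 1 - λ` for `i < j`. -/
theorem stmt15 {V : Type*} [Fintype V] [DecidableEq V] (E : V → V → Prop)
    [DecidableRel E] (hT : IsTournament E) (P : ℕ) (hP : 0 < P)
    (lam : ℝ) (hlam : 0 ≤ lam) (W : Fin P → Finset V) (w : ℕ)
    (hdisj : ∀ i j, i ≠ j → Disjoint (W i) (W j))
    (hcard : ∀ i, (W i).card = w)
    (hdens : ∀ i j, i < j → 1 - lam / (4 * (P : ℝ)) ≤ density E (W i) (W j)) :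
    ∃ A : Fin P → Finset V,
      (∀ i, A i ⊆ W i) ∧ (∀ i, (A i).card = (w + 1) / 2) ∧
      (∀ i j, i < j → ∀ v ∈ A i, 1 - lam ≤ density E {v} (A j)) ∧
      (∀ i j, i < j → ∀ v ∈ A j, 1 - lam ≤ density E (A i) {v}) :=
  stmt15_general E P lam hlam W w hcard hdens
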